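/- arXiv:1907.05105 — 4 statements merged into one kernel-verified Lean document; each statement's English description precedes it below -/
import Mathlib

section
/- The sum over monic polynomials F of degree 3 in F_q[T] of 1/2^{omega(F)} equals (5q^3 + q^2 + 2q)/16, where omega(F) is the number of distinct monic irreducible divisors of F. -/
open Polynomial

section Aux

variable {K : Type*} [Field K]

private lemma eq_of_monic_irred_dvd {P F : K[X]} (hP : P.Monic) (hPi : Irreducible P)
    (hF : F.Monic) (hFi : Irreducible F) (h : P ∣ F) : P = F :=
  Polynomial.eq_of_monic_of_associated hP hF (hPi.associated_of_dvd hFi h)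

private lemma prime_of_irred {P : K[X]} (h : Irreducible P) : Prime P :=
  (UniqueFactorizationMonoid.irreducible_iff_prime).mp h

private lemma omegaSet_multiset (m : Multiset K[X]) (hm : ∀ P ∈ m, P.Monic ∧ Irreducible P) :
    {P : K[X] | P.Monic ∧ Irreducible P ∧ P ∣ m.prod} = {P | P ∈ m} := by
  ext P
  constructor
  · rintro ⟨h1, h2, h3⟩
    obtain ⟨a, ha, hPa⟩ := (prime_of_irred h2).exists_mem_multiset_dvd h3
    have := eq_of_monic_irred_dvd h1 h2 (hm a ha).1 (hm a ha).2 hPa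
    simpa [this] using ha
  · intro hP
    exact ⟨(hm P hP).1, (hm P hP).2, Multiset.dvd_prod hP⟩

private lemma natCard_eq (F : K[X]) :
    Nat.card {P : K[X] // P.Monic ∧ Irreducible P ∧ P ∣ F}
      = ({P : K[X] | P.Monic ∧ Irreducible P ∧ P ∣ F}).ncard :=
  Nat.card_coe_set_eq _

private lemma omegaSet_eq {F : K[X]} (m : Multiset K[X]) (hFm : F = m.prod)
    (hm : ∀ P ∈ m, P.Monic ∧ Irreducible P) :
    {P : K[X] | P.Monic ∧ Irreducible P ∧ P ∣ F} = {P | P ∈ m} :=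
  hFm ▸ omegaSet_multiset m hm

private lemma natCard_A {F : K[X]} (hF : F.Monic) (hFi : Irreducible F) :
    Nat.card {P : K[X] // P.Monic ∧ Irreducible P ∧ P ∣ F} = 1 := by
  rw [natCard_eq]
  have : {P : K[X] | P.Monic ∧ Irreducible P ∧ P ∣ F} = {F} := by
    ext P
    simp only [Set.mem_setOf_eq, Set.mem_singleton_iff]
    exact ⟨fun ⟨h1, h2, h3⟩ => eq_of_monic_irred_dvd h1 h2 hF hFi h3,
      fun h => by subst h; exact ⟨hF, hFi, dvd_rfl⟩⟩
  rw [this, Set.ncard_singleton]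

private lemma natCard_B {a : K} {Q : K[X]} (hQm : Q.Monic) (hQi : Irreducible Q)
    (hQd : Q.natDegree = 2) :
    Nat.card {P : K[X] // P.Monic ∧ Irreducible P ∧ P ∣ (X - C a) * Q} = 2 := by
  rw [natCard_eq]
  rw [omegaSet_eq ({X - C a, Q} : Multiset K[X]) (by simp)
    (by intro P hP; rcases (by simpa using hP : P = X - C a ∨ P = Q) with rfl | rfl
        exacts [⟨monic_X_sub_C a, irreducible_X_sub_C a⟩, ⟨hQm, hQi⟩])]
  have hne : X - C a ≠ Q := by
    intro h
    rw [← h, natDegree_X_sub_C] at hQd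
    omega
  have : {P : K[X] | P ∈ ({X - C a, Q} : Multiset K[X])} = {X - C a, Q} := by
    ext P; simp
  rw [this, Set.ncard_pair hne]

private lemma natCard_C (a : K) :
    Nat.card {P : K[X] // P.Monic ∧ Irreducible P ∧ P ∣ (X - C a) ^ 3} = 1 := by
  rw [natCard_eq]
  rw [omegaSet_eq (Multiset.replicate 3 (X - C a)) (by rw [Multiset.prod_replicate])
    (by intro P hP
        rw [Multiset.eq_of_mem_replicate hP]
        exact ⟨monic_X_sub_C a, irreducible_X_sub_C a⟩)]
  have : {P : K[X] | P ∈ Multiset.replicate 3 (X - C a)} = {X - C a} := by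
    ext P; simp [Multiset.mem_replicate]
  rw [this, Set.ncard_singleton]

private lemma natCard_D {a b : K} (hab : a ≠ b) :
    Nat.card {P : K[X] // P.Monic ∧ Irreducible P ∧ P ∣ (X - C a) ^ 2 * (X - C b)} = 2 := by
  rw [natCard_eq]
  rw [omegaSet_eq ({X - C a, X - C a, X - C b} : Multiset K[X])
    (by simp [Multiset.prod_cons]; ring)
    (by intro P hP
        rcases (by simpa using hP : P = X - C a ∨ P = X - C a ∨ P = X - C b) with rfl | rfl | rfl
        all_goals exact ⟨monic_X_sub_C _, irreducible_X_sub_C _⟩)]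
  have : {P : K[X] | P ∈ ({X - C a, X - C a, X - C b} : Multiset K[X])}
      = {X - C a, X - C b} := by
    ext P; simp
  rw [this]
  have hne : (X - C a : K[X]) ≠ X - C b := by
    intro h
    apply hab
    have := congrArg (fun p : K[X] => p.coeff 0) h
    simpa using this
  rw [Set.ncard_pair hne]

private lemma natCard_E {s : Finset K} :
    Nat.card {P : K[X] // P.Monic ∧ Irreducible P ∧ P ∣ ∏ x ∈ s, (X - C x)} = s.card := by
  rw [natCard_eq]
  rw [omegaSet_eq (s.val.map fun x => X - C x) (Finset.prod_eq_multiset_prod s _)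
    (by intro P hP
        obtain ⟨x, -, rfl⟩ := Multiset.mem_map.mp hP
        exact ⟨monic_X_sub_C _, irreducible_X_sub_C _⟩)]
  have : {P : K[X] | P ∈ s.val.map fun x => X - C x} = (fun x : K => X - C x) '' ↑s := by
    ext P; simp [Multiset.mem_map]
  rw [this, Set.ncard_image_of_injective _ fun x y h => by
    simpa using congrArg (fun p : K[X] => -p.coeff 0) h]
  exact Set.ncard_coe_finset s

private lemma roots_irred {F : K[X]} (hF : F.Monic) (hFi : Irreducible F)
    (h2 : 2 ≤ F.natDegree) : F.roots = 0 := by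
  rw [Multiset.eq_zero_iff_forall_notMem]
  intro r hr
  have hdvd : (X - C r) ∣ F := dvd_iff_isRoot.mpr (isRoot_of_mem_roots hr)
  have heq := eq_of_monic_irred_dvd (monic_X_sub_C r) (irreducible_X_sub_C r) hF hFi hdvd
  have : F.natDegree = 1 := by rw [← heq, natDegree_X_sub_C]
  omega

private lemma eq_X_sub_C_of_monic_deg_one {p : K[X]} (hp : p.Monic) (h1 : p.natDegree = 1) :
    ∃ a : K, p = X - C a := by
  refine ⟨-(p.coeff 0), ?_⟩
  have hd : p.degree ≤ 1 := by
    rw [degree_eq_natDegree hp.ne_zero, h1]; exact le_rfl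
  have he := eq_X_add_C_of_degree_le_one hd
  have hc1 : p.coeff 1 = 1 := by
    have := hp.coeff_natDegree; rwa [h1] at this
  rw [hc1] at he
  conv_lhs => rw [he]
  rw [map_neg, sub_neg_eq_add, map_one, one_mul]

private lemma root_of_deg_one {g : K[X]} (h1 : g.natDegree = 1) : ∃ a, g.IsRoot a := by
  have hg0 : g ≠ 0 := fun h => by simp [h] at h1
  have hd : g.degree ≤ 1 := by rw [degree_eq_natDegree hg0, h1]; exact_mod_cast le_rfl
  have he := eq_X_add_C_of_degree_le_one hd
  have hc1 : g.coeff 1 ≠ 0 := by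
    have := hg0; rw [← leadingCoeff_ne_zero] at this
    rwa [leadingCoeff, h1] at this
  refine ⟨-(g.coeff 0) / (g.coeff 1), ?_⟩
  rw [IsRoot, he]
  simp
  field_simp
  ring

private lemma exists_root_of_reducible {p : K[X]} (hp : p.Monic)
    (hd : p.natDegree = 2 ∨ p.natDegree = 3) (h : ¬Irreducible p) : ∃ a, p.IsRoot a := by
  have hp0 : p ≠ 0 := hp.ne_zero
  have hpu : ¬IsUnit p := by
    intro hu
    have := natDegree_eq_zero_of_isUnit hu
    omega
  rw [irreducible_iff] at h
  push_neg at h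
  obtain ⟨g, h', hgh, hg, hh⟩ := h hpu
  have hg0 : g ≠ 0 := by rintro rfl; rw [zero_mul] at hgh; exact hp0 hgh
  have hh0 : h' ≠ 0 := by rintro rfl; rw [mul_zero] at hgh; exact hp0 hgh
  have hdeg : g.natDegree + h'.natDegree = p.natDegree := by
    rw [hgh, natDegree_mul hg0 hh0]
  have hg1 : g.natDegree ≠ 0 := by
    intro h0
    obtain ⟨c, hc⟩ := natDegree_eq_zero.mp h0
    have hc0 : c ≠ 0 := by rintro rfl; simp at hc; exact hg0 hc.symm
    exact hg (hc ▸ (isUnit_C.mpr (IsUnit.mk0 c hc0)))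
  have hh1 : h'.natDegree ≠ 0 := by
    intro h0
    obtain ⟨c, hc⟩ := natDegree_eq_zero.mp h0
    have hc0 : c ≠ 0 := by rintro rfl; simp at hc; exact hh0 hc.symm
    exact hh (hc ▸ (isUnit_C.mpr (IsUnit.mk0 c hc0)))
  rcases (by omega : g.natDegree = 1 ∨ h'.natDegree = 1) with h1 | h1
  · obtain ⟨a, ha⟩ := root_of_deg_one h1
    exact ⟨a, by rw [IsRoot, hgh, eval_mul, ha, zero_mul]⟩
  · obtain ⟨a, ha⟩ := root_of_deg_one h1
    exact ⟨a, by rw [IsRoot, hgh, eval_mul, ha, mul_zero]⟩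

private lemma factor_root {p : K[X]} (hp : p.Monic) {a : K} (ha : p.IsRoot a) :
    ∃ G : K[X], G.Monic ∧ p = (X - C a) * G ∧ G.natDegree + 1 = p.natDegree := by
  obtain ⟨G, hG⟩ := dvd_iff_isRoot.mpr ha
  have hGm : G.Monic := (monic_X_sub_C a).of_mul_monic_left (hG ▸ hp)
  refine ⟨G, hGm, hG, ?_⟩
  rw [hG, natDegree_mul (X_sub_C_ne_zero a) hGm.ne_zero, natDegree_X_sub_C]
  omega

private lemma cubic_decomp {p : K[X]} (hp : p.Monic) (h3 : p.natDegree = 3)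
    (hirr : ¬Irreducible p) :
    (∃ a Q, Q.Monic ∧ Q.natDegree = 2 ∧ Irreducible Q ∧ p = (X - C a) * Q) ∨
      (∃ a b c, p = (X - C a) * ((X - C b) * (X - C c))) := by
  obtain ⟨a, ha⟩ := exists_root_of_reducible hp (Or.inr h3) hirr
  obtain ⟨G, hGm, hpG, hGd⟩ := factor_root hp ha
  have hG2 : G.natDegree = 2 := by omega
  by_cases hGi : Irreducible G
  · exact Or.inl ⟨a, G, hGm, hG2, hGi, hpG⟩
  · obtain ⟨b, hb⟩ := exists_root_of_reducible hGm (Or.inl hG2) hGi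
    obtain ⟨H, hHm, hGH, hHd⟩ := factor_root hGm hb
    obtain ⟨c, hc⟩ := eq_X_sub_C_of_monic_deg_one hHm (by omega)
    exact Or.inr ⟨a, b, c, by rw [hpG, hGH, hc]⟩

private lemma monic_cubic_eq {p : K[X]} (hm : p.Monic) (h : p.natDegree = 3) :
    p = X ^ 3 + C (p.coeff 2) * X ^ 2 + C (p.coeff 1) * X + C (p.coeff 0) := by
  have h4 : ∀ m, 3 < m → p.coeff m = 0 := fun m hm' =>
    coeff_eq_zero_of_natDegree_lt (h ▸ hm')
  have h3 : p.coeff 3 = 1 := by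
    have := hm.coeff_natDegree; rwa [h] at this
  ext n
  rcases n with _ | _ | _ | _ | n <;>
    simp [coeff_X_pow, coeff_C, h3]
  exact h4 (n + 1 + 1 + 1 + 1) (by omega)

private lemma monic_quad_eq {p : K[X]} (hm : p.Monic) (h : p.natDegree = 2) :
    p = X ^ 2 + C (p.coeff 1) * X + C (p.coeff 0) := by
  have h4 : ∀ m, 2 < m → p.coeff m = 0 := fun m hm' =>
    coeff_eq_zero_of_natDegree_lt (h ▸ hm')
  have h3 : p.coeff 2 = 1 := by
    have := hm.coeff_natDegree; rwa [h] at this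
  ext n
  rcases n with _ | _ | _ | n <;>
    simp [coeff_X_pow, coeff_C, h3]
  exact h4 (n + 1 + 1 + 1) (by omega)

end Aux

private lemma cubic_param_inj {K : Type*} [Field K] : Function.Injective
    (fun t : K × K × K => X ^ 3 + C t.1 * X ^ 2 + C t.2.1 * X + C t.2.2) := by
  rintro ⟨a, b, c⟩ ⟨a', b', c'⟩ h
  simp only at h
  have h2 := congrArg (fun p : K[X] => p.coeff 2) h
  have h1 := congrArg (fun p : K[X] => p.coeff 1) h
  have h0 := congrArg (fun p : K[X] => p.coeff 0) h
  simp [coeff_X_pow, coeff_C] at h2 h1 h0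
  simp [h0, h1, h2]

private lemma quad_param_inj {K : Type*} [Field K] : Function.Injective
    (fun t : K × K => X ^ 2 + C t.1 * X + C t.2) := by
  rintro ⟨a, b⟩ ⟨a', b'⟩ h
  simp only at h
  have h1 := congrArg (fun p : K[X] => p.coeff 1) h
  have h0 := congrArg (fun p : K[X] => p.coeff 0) h
  simp [coeff_X_pow, coeff_C] at h1 h0
  simp [h0, h1]

/-- `∑_{F monic, deg F = 3} 1/2^{ω(F)} = (5q³ + q² + 2q)/16`, where `ω(F)` is the number
of distinct monic irreducible divisors of `F`. -/
theorem sum_deg_three_inv_two_pow_omega (q : ℕ) (K : Type*) [Field K] [Fintype K]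
    (hK : Fintype.card K = q) :
    ∑' F : {p : Polynomial K // p.Monic ∧ p.natDegree = 3},
        (1 : ℝ) / 2 ^ (Nat.card {P : Polynomial K // P.Monic ∧ Irreducible P ∧ P ∣ F.1}) =
      (5 * (q : ℝ) ^ 3 + (q : ℝ) ^ 2 + 2 * q) / 16 := by
  classical
  have hq2 : 2 ≤ q := hK ▸ Fintype.one_lt_card
  set g : K[X] → ℝ :=
    fun p => (1 : ℝ) / 2 ^ (Nat.card {P : K[X] // P.Monic ∧ Irreducible P ∧ P ∣ p}) with hg
  set M3 : Finset K[X] := Finset.image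
    (fun t : K × K × K => X ^ 3 + C t.1 * X ^ 2 + C t.2.1 * X + C t.2.2) Finset.univ with hM3def
  set M2 : Finset K[X] := Finset.image
    (fun t : K × K => X ^ 2 + C t.1 * X + C t.2) Finset.univ with hM2def
  set Q2 : Finset K[X] := M2.filter Irreducible with hQ2def
  set R2 : Finset K[X] := Finset.image
    (fun m : Sym K 2 => (m.1.map fun a => X - C a).prod) Finset.univ with hR2def
  set A : Finset K[X] := M3.filter Irreducible with hAdef
  set B : Finset K[X] := Finset.image (fun t : K × K[X] => (X - C t.1) * t.2)
    (Finset.univ ×ˢ Q2) with hBdef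
  set Cc : Finset K[X] := Finset.image (fun a : K => (X - C a) ^ 3) Finset.univ with hCcdef
  set D : Finset K[X] := Finset.image (fun t : K × K => (X - C t.1) ^ 2 * (X - C t.2))
    Finset.univ.offDiag with hDdef
  set E : Finset K[X] := Finset.image (fun s : Finset K => ∏ x ∈ s, (X - C x))
    (Finset.powersetCard 3 Finset.univ) with hEdef
  -- membership characterizations
  have hM3 : ∀ p : K[X], p ∈ M3 ↔ p.Monic ∧ p.natDegree = 3 := by
    intro p
    constructor
    · intro hp
      obtain ⟨t, -, rfl⟩ := Finset.mem_image.mp hp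
      constructor
      · monicity!
      · compute_degree!
    · rintro ⟨hm, hd⟩
      exact Finset.mem_image.mpr ⟨(p.coeff 2, p.coeff 1, p.coeff 0), Finset.mem_univ _,
        (monic_cubic_eq hm hd).symm⟩
  have hM2 : ∀ p : K[X], p ∈ M2 ↔ p.Monic ∧ p.natDegree = 2 := by
    intro p
    constructor
    · intro hp
      obtain ⟨t, -, rfl⟩ := Finset.mem_image.mp hp
      constructor
      · monicity!
      · compute_degree!
    · rintro ⟨hm, hd⟩
      exact Finset.mem_image.mpr ⟨(p.coeff 1, p.coeff 0), Finset.mem_univ _,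
        (monic_quad_eq hm hd).symm⟩
  have hQ2 : ∀ p : K[X], p ∈ Q2 ↔ p.Monic ∧ p.natDegree = 2 ∧ Irreducible p := by
    intro p
    rw [hQ2def, Finset.mem_filter, hM2 p]
    tauto
  -- reduce the tsum to a finite sum over M3
  have htsum : (∑' F : {p : K[X] // p.Monic ∧ p.natDegree = 3}, g F.1) = ∑ p ∈ M3, g p := by
    have h1 := Finset.tsum_subtype M3 g
    have h2 := Equiv.tsum_eq (Equiv.subtypeEquivRight (fun p : K[X] => (hM3 p)))
      (fun F : {p : K[X] // p.Monic ∧ p.natDegree = 3} => g F.1)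
    exact h2.symm.trans h1
  -- cardinalities of M3 and M2
  have hM3card : M3.card = q ^ 3 := by
    rw [hM3def, Finset.card_image_of_injective _ cubic_param_inj, Finset.card_univ]
    simp [hK]; ring
  have hM2card : M2.card = q ^ 2 := by
    rw [hM2def, Finset.card_image_of_injective _ quad_param_inj, Finset.card_univ]
    simp [hK]; ring
  -- R2 : reducible monic quadratics
  have hR2card : R2.card = (q + 1).choose 2 := by
    rw [hR2def, Finset.card_image_of_injective _ ?_, Finset.card_univ, Sym.card_sym_eq_choose, hK]
    · norm_num
    · intro m m' h
      have hr := congrArg Polynomial.roots h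
      rw [roots_multiset_prod_X_sub_C, roots_multiset_prod_X_sub_C] at hr
      exact Subtype.ext hr
  have hM2eq : M2 = Q2 ∪ R2 := by
    apply Finset.Subset.antisymm
    · intro p hp
      obtain ⟨hm, hd⟩ := (hM2 p).mp hp
      by_cases hirr : Irreducible p
      · exact Finset.mem_union_left _ (by rw [hQ2def]; exact Finset.mem_filter.mpr ⟨hp, hirr⟩)
      · obtain ⟨a, ha⟩ := exists_root_of_reducible hm (Or.inl hd) hirr
        obtain ⟨G, hGm, hpG, hGd⟩ := factor_root hm ha
        obtain ⟨b, rfl⟩ := eq_X_sub_C_of_monic_deg_one hGm (by omega)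
        refine Finset.mem_union_right _ (Finset.mem_image.mpr
          ⟨⟨{a, b}, by simp⟩, Finset.mem_univ _, ?_⟩)
        simpa using hpG.symm
    · intro p hp
      rcases Finset.mem_union.mp hp with h | h
      · exact (Finset.mem_filter.mp h).1
      · obtain ⟨m, -, rfl⟩ := Finset.mem_image.mp h
        obtain ⟨a, b, hab⟩ := Multiset.card_eq_two.mp m.2
        have hme : (m.1.map fun x => X - C x).prod = (X - C a) * (X - C b) := by
          rw [hab]; simp
        rw [hM2, hme]
        refine ⟨(monic_X_sub_C a).mul (monic_X_sub_C b), ?_⟩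
        rw [natDegree_mul (X_sub_C_ne_zero a) (X_sub_C_ne_zero b),
          natDegree_X_sub_C, natDegree_X_sub_C]
  have hQR : Disjoint Q2 R2 := by
    rw [Finset.disjoint_left]
    intro p hpQ hpR
    obtain ⟨-, -, hirr⟩ := (hQ2 p).mp hpQ
    obtain ⟨m, -, rfl⟩ := Finset.mem_image.mp hpR
    obtain ⟨a, b, hab⟩ := Multiset.card_eq_two.mp m.2
    have hme : (m.1.map fun x => X - C x).prod = (X - C a) * (X - C b) := by
      rw [hab]; simp
    rw [hme] at hirr
    rcases hirr.isUnit_or_isUnit rfl with h | h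
    exacts [Polynomial.not_isUnit_X_sub_C a h, Polynomial.not_isUnit_X_sub_C b h]
  have hQ2card : Q2.card + (q + 1).choose 2 = q ^ 2 := by
    rw [← hR2card, ← Finset.card_union_of_disjoint hQR, ← hM2eq, hM2card]
  -- root-multiset invariants of the five classes
  have hinvA : ∀ p ∈ A, Multiset.card p.roots = 0 := by
    intro p hp
    obtain ⟨hpM, hirr⟩ := Finset.mem_filter.mp hp
    obtain ⟨hm, hd⟩ := (hM3 p).mp hpM
    rw [roots_irred hm hirr (by omega)]
    rfl
  have hinvB : ∀ p ∈ B, Multiset.card p.roots = 1 := by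
    intro p hp
    obtain ⟨⟨a, Q⟩, ht, rfl⟩ := Finset.mem_image.mp hp
    obtain ⟨hQm, hQd, hQi⟩ := (hQ2 Q).mp (Finset.mem_product.mp ht).2
    rw [roots_mul (mul_ne_zero (X_sub_C_ne_zero a) hQm.ne_zero), roots_X_sub_C,
      roots_irred hQm hQi (by omega)]
    rfl
  have hinvC : ∀ p ∈ Cc, Multiset.card p.roots = 3 ∧ p.roots.toFinset.card = 1 := by
    intro p hp
    obtain ⟨a, -, rfl⟩ := Finset.mem_image.mp hp
    rw [roots_pow, roots_X_sub_C]
    constructor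
    · simp
    · rw [Multiset.nsmul_singleton, Multiset.toFinset_replicate]
      simp
  have hinvD : ∀ p ∈ D, Multiset.card p.roots = 3 ∧ p.roots.toFinset.card = 2 := by
    intro p hp
    obtain ⟨⟨a, b⟩, ht, rfl⟩ := Finset.mem_image.mp hp
    have hab : a ≠ b := (Finset.mem_offDiag.mp ht).2.2
    rw [roots_mul (mul_ne_zero (pow_ne_zero 2 (X_sub_C_ne_zero a)) (X_sub_C_ne_zero b)),
      roots_pow, roots_X_sub_C, roots_X_sub_C]
    constructor
    · simp
    · rw [Multiset.toFinset_add, Multiset.nsmul_singleton, Multiset.toFinset_replicate]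
      rw [Finset.card_eq_two]
      exact ⟨a, b, hab, by ext x; simp⟩
  have hinvE : ∀ p ∈ E, Multiset.card p.roots = 3 ∧ p.roots.toFinset.card = 3 := by
    intro p hp
    obtain ⟨s, hs, rfl⟩ := Finset.mem_image.mp hp
    have hs3 : s.card = 3 := (Finset.mem_powersetCard.mp hs).2
    rw [roots_prod_X_sub_C, Finset.val_toFinset]
    exact ⟨hs3, hs3⟩
  -- pairwise disjointness
  have hd4 : Disjoint D E := by
    rw [Finset.disjoint_left]
    intro p hpD hpE
    have h1 := (hinvD p hpD).2
    have h2 := (hinvE p hpE).2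
    omega
  have hd3 : Disjoint Cc (D ∪ E) := by
    rw [Finset.disjoint_left]
    intro p hpC hp
    have h1 := (hinvC p hpC).2
    rcases Finset.mem_union.mp hp with h | h
    · have := (hinvD p h).2; omega
    · have := (hinvE p h).2; omega
  have hd2 : Disjoint B (Cc ∪ (D ∪ E)) := by
    rw [Finset.disjoint_left]
    intro p hpB hp
    have h1 := hinvB p hpB
    rcases Finset.mem_union.mp hp with h | h
    · have := (hinvC p h).1; omega
    · rcases Finset.mem_union.mp h with h' | h'
      · have := (hinvD p h').1; omega
      · have := (hinvE p h').1; omega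
  have hd1 : Disjoint A (B ∪ (Cc ∪ (D ∪ E))) := by
    rw [Finset.disjoint_left]
    intro p hpA hp
    have h1 := hinvA p hpA
    rcases Finset.mem_union.mp hp with h | h
    · have := hinvB p h; omega
    · rcases Finset.mem_union.mp h with h' | h'
      · have := (hinvC p h').1; omega
      · rcases Finset.mem_union.mp h' with h'' | h''
        · have := (hinvD p h'').1; omega
        · have := (hinvE p h'').1; omega
  -- the five classes partition M3
  have hcover : M3 = A ∪ (B ∪ (Cc ∪ (D ∪ E))) := by
    apply Finset.Subset.antisymm
    · intro p hp
      obtain ⟨hm, hd⟩ := (hM3 p).mp hp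
      by_cases hirr : Irreducible p
      · exact Finset.mem_union_left _ (Finset.mem_filter.mpr ⟨hp, hirr⟩)
      · refine Finset.mem_union_right _ ?_
        rcases cubic_decomp hm hd hirr with ⟨a, Q, hQm, hQd, hQi, rfl⟩ | ⟨a, b, c, rfl⟩
        · exact Finset.mem_union_left _ (Finset.mem_image.mpr ⟨(a, Q),
            Finset.mem_product.mpr ⟨Finset.mem_univ _, (hQ2 Q).mpr ⟨hQm, hQd, hQi⟩⟩, rfl⟩)
        · refine Finset.mem_union_right _ ?_
          by_cases hab : a = b
          · by_cases hac : a = c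
            · -- all three equal : class Cc
              subst hab; subst hac
              exact Finset.mem_union_left _ (Finset.mem_image.mpr
                ⟨a, Finset.mem_univ _, by ring⟩)
            · -- a = b ≠ c : class D
              subst hab
              exact Finset.mem_union_right _ (Finset.mem_union_left _ (Finset.mem_image.mpr
                ⟨(a, c), Finset.mem_offDiag.mpr ⟨Finset.mem_univ _, Finset.mem_univ _, hac⟩,
                  by simp only; ring⟩))
          · by_cases hac : a = c
            · -- a = c ≠ b : class D
              subst hac
              exact Finset.mem_union_right _ (Finset.mem_union_left _ (Finset.mem_image.mpr
                ⟨(a, b), Finset.mem_offDiag.mpr ⟨Finset.mem_univ _, Finset.mem_univ _, hab⟩,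
                  by simp only; ring⟩))
            · by_cases hbc : b = c
              · -- b = c ≠ a : class D
                subst hbc
                exact Finset.mem_union_right _ (Finset.mem_union_left _ (Finset.mem_image.mpr
                  ⟨(b, a), Finset.mem_offDiag.mpr ⟨Finset.mem_univ _, Finset.mem_univ _,
                    fun h => hab h.symm⟩, by simp only; ring⟩))
              · -- all distinct : class E
                refine Finset.mem_union_right _ (Finset.mem_union_right _
                  (Finset.mem_image.mpr ⟨{a, b, c}, ?_, ?_⟩))
                · rw [Finset.mem_powersetCard]
                  refine ⟨Finset.subset_univ _, ?_⟩
                  rw [Finset.card_insert_of_notMem (by simp [hab, hac]),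
                    Finset.card_insert_of_notMem (by simp [hbc]), Finset.card_singleton]
                · rw [Finset.prod_insert (by simp [hab, hac]),
                    Finset.prod_insert (by simp [hbc]), Finset.prod_singleton]
    · intro p hp
      rw [hM3]
      rcases Finset.mem_union.mp hp with h | h
      · exact (hM3 p).mp (Finset.mem_filter.mp h).1
      rcases Finset.mem_union.mp h with h | h
      · obtain ⟨⟨a, Q⟩, ht, rfl⟩ := Finset.mem_image.mp h
        obtain ⟨hQm, hQd, hQi⟩ := (hQ2 Q).mp (Finset.mem_product.mp ht).2
        refine ⟨(monic_X_sub_C a).mul hQm, ?_⟩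
        rw [natDegree_mul (X_sub_C_ne_zero a) hQm.ne_zero, natDegree_X_sub_C, hQd]
      rcases Finset.mem_union.mp h with h | h
      · obtain ⟨a, -, rfl⟩ := Finset.mem_image.mp h
        refine ⟨(monic_X_sub_C a).pow 3, ?_⟩
        rw [natDegree_pow, natDegree_X_sub_C]
      rcases Finset.mem_union.mp h with h | h
      · obtain ⟨⟨a, b⟩, -, rfl⟩ := Finset.mem_image.mp h
        refine ⟨((monic_X_sub_C a).pow 2).mul (monic_X_sub_C b), ?_⟩
        rw [natDegree_mul (pow_ne_zero 2 (X_sub_C_ne_zero a)) (X_sub_C_ne_zero b),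
          natDegree_pow, natDegree_X_sub_C, natDegree_X_sub_C]
      · obtain ⟨s, hs, rfl⟩ := Finset.mem_image.mp h
        have hs3 : s.card = 3 := (Finset.mem_powersetCard.mp hs).2
        refine ⟨monic_prod_of_monic _ _ (fun x _ => monic_X_sub_C x), ?_⟩
        rw [natDegree_prod _ _ (fun x _ => X_sub_C_ne_zero x)]
        simp [natDegree_X_sub_C, hs3]
  -- value of the summand on each class
  have hvA : ∀ p ∈ A, g p = 1 / 2 := by
    intro p hp
    obtain ⟨hpM, hirr⟩ := Finset.mem_filter.mp hp
    simp only [hg]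
    rw [natCard_A ((hM3 p).mp hpM).1 hirr]
    norm_num
  have hvB : ∀ p ∈ B, g p = 1 / 4 := by
    intro p hp
    obtain ⟨⟨a, Q⟩, ht, rfl⟩ := Finset.mem_image.mp hp
    obtain ⟨hQm, hQd, hQi⟩ := (hQ2 Q).mp (Finset.mem_product.mp ht).2
    simp only [hg]
    rw [natCard_B hQm hQi hQd]
    norm_num
  have hvC : ∀ p ∈ Cc, g p = 1 / 2 := by
    intro p hp
    obtain ⟨a, -, rfl⟩ := Finset.mem_image.mp hp
    simp only [hg]
    rw [natCard_C a]
    norm_num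
  have hvD : ∀ p ∈ D, g p = 1 / 4 := by
    intro p hp
    obtain ⟨⟨a, b⟩, ht, rfl⟩ := Finset.mem_image.mp hp
    have hab : a ≠ b := (Finset.mem_offDiag.mp ht).2.2
    simp only [hg]
    rw [natCard_D hab]
    norm_num
  have hvE : ∀ p ∈ E, g p = 1 / 8 := by
    intro p hp
    obtain ⟨s, hs, rfl⟩ := Finset.mem_image.mp hp
    have hs3 : s.card = 3 := (Finset.mem_powersetCard.mp hs).2
    simp only [hg]
    rw [natCard_E, hs3]
    norm_num
  -- class sums
  have hsA : ∑ p ∈ A, g p = A.card * (1 / 2 : ℝ) := by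
    rw [Finset.sum_congr rfl hvA, Finset.sum_const, nsmul_eq_mul]
  have hsB : ∑ p ∈ B, g p = B.card * (1 / 4 : ℝ) := by
    rw [Finset.sum_congr rfl hvB, Finset.sum_const, nsmul_eq_mul]
  have hsC : ∑ p ∈ Cc, g p = Cc.card * (1 / 2 : ℝ) := by
    rw [Finset.sum_congr rfl hvC, Finset.sum_const, nsmul_eq_mul]
  have hsD : ∑ p ∈ D, g p = D.card * (1 / 4 : ℝ) := by
    rw [Finset.sum_congr rfl hvD, Finset.sum_const, nsmul_eq_mul]
  have hsE : ∑ p ∈ E, g p = E.card * (1 / 8 : ℝ) := by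
    rw [Finset.sum_congr rfl hvE, Finset.sum_const, nsmul_eq_mul]
  -- cardinalities of the classes
  have hCcard : Cc.card = q := by
    rw [hCcdef, Finset.card_image_of_injective _ ?_, Finset.card_univ, hK]
    intro x y h
    have hr := congrArg Polynomial.roots h
    rw [roots_pow, roots_pow, roots_X_sub_C, roots_X_sub_C, Multiset.nsmul_singleton,
      Multiset.nsmul_singleton] at hr
    have hx : x ∈ Multiset.replicate 3 y := by
      rw [← hr]; simp [Multiset.mem_replicate]
    exact Multiset.eq_of_mem_replicate hx
  have hDcard : D.card = q * q - q := by
    rw [hDdef, Finset.card_image_of_injOn ?_, Finset.offDiag_card, Finset.card_univ, hK]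
    rintro ⟨a, b⟩ ha ⟨a', b'⟩ hb h
    simp only [Finset.coe_offDiag, Finset.coe_univ, Set.mem_offDiag] at ha hb
    have hab : a ≠ b := ha.2.2
    have hab' : a' ≠ b' := hb.2.2
    simp only at h
    have hr := congrArg Polynomial.roots h
    rw [roots_mul (mul_ne_zero (pow_ne_zero 2 (X_sub_C_ne_zero a)) (X_sub_C_ne_zero b)),
      roots_mul (mul_ne_zero (pow_ne_zero 2 (X_sub_C_ne_zero a')) (X_sub_C_ne_zero b')),
      roots_pow, roots_pow, roots_X_sub_C, roots_X_sub_C, roots_X_sub_C, roots_X_sub_C] at hr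
    have hca := congrArg (Multiset.count a) hr
    simp only [Multiset.count_add, Multiset.count_nsmul, Multiset.count_singleton] at hca
    rw [if_pos trivial, if_neg hab] at hca
    have haa : a = a' := by
      by_contra hne
      rw [if_neg hne] at hca
      split_ifs at hca <;> omega
    subst haa
    have hbb : b = b' := by
      have := add_left_cancel hr
      simpa [Multiset.singleton_inj] using this
    rw [hbb]
  have hEcard : E.card = q.choose 3 := by
    rw [hEdef, Finset.card_image_of_injOn ?_, Finset.card_powersetCard, Finset.card_univ, hK]
    intro s hs t ht h
    have hr := congrArg Polynomial.roots h
    rw [roots_prod_X_sub_C, roots_prod_X_sub_C] at hr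
    exact Finset.val_inj.mp hr
  have hBcard : B.card = q * Q2.card := by
    rw [hBdef, Finset.card_image_of_injOn ?_, Finset.card_product, Finset.card_univ, hK]
    rintro ⟨a, Q⟩ ht ⟨a', Q'⟩ ht' h
    simp only [Finset.coe_product, Set.mem_prod, Finset.mem_coe] at ht ht'
    obtain ⟨hQm, hQd, hQi⟩ := (hQ2 Q).mp ht.2
    obtain ⟨hQm', hQd', hQi'⟩ := (hQ2 Q').mp ht'.2
    simp only at h
    have hr := congrArg Polynomial.roots h
    rw [roots_mul (mul_ne_zero (X_sub_C_ne_zero a) hQm.ne_zero),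
      roots_mul (mul_ne_zero (X_sub_C_ne_zero a') hQm'.ne_zero),
      roots_X_sub_C, roots_X_sub_C, roots_irred hQm hQi (by omega),
      roots_irred hQm' hQi' (by omega)] at hr
    have haa : a = a' := by simpa [Multiset.singleton_inj] using hr
    subst haa
    have hQQ : Q = Q' := mul_left_cancel₀ (X_sub_C_ne_zero a) h
    rw [hQQ]
  have hpart : A.card + (B.card + (Cc.card + (D.card + E.card))) = q ^ 3 := by
    rw [← Finset.card_union_of_disjoint hd4, ← Finset.card_union_of_disjoint hd3,
      ← Finset.card_union_of_disjoint hd2, ← Finset.card_union_of_disjoint hd1, ← hcover,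
      hM3card]
  -- put everything together
  simp only [hg] at htsum hsA hsB hsC hsD hsE
  rw [htsum, hcover, Finset.sum_union hd1, Finset.sum_union hd2, Finset.sum_union hd3,
    Finset.sum_union hd4, hsA, hsB, hsC, hsD, hsE]
  -- real versions of the cardinalities
  have hCr : (Cc.card : ℝ) = q := by rw [hCcard]
  have hDr : (D.card : ℝ) = (q : ℝ) ^ 2 - q := by
    rw [hDcard, Nat.cast_sub (Nat.le_mul_of_pos_left q (by omega))]
    push_cast
    ring
  have hQ2r : (Q2.card : ℝ) = ((q : ℝ) ^ 2 - q) / 2 := by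
    have h1 : ((q + 1).choose 2 : ℝ) = ((q : ℝ) + 1) * (((q : ℝ) + 1) - 1) / 2 := by
      rw [Nat.cast_choose_two]
      push_cast
      ring
    have h2 : (Q2.card : ℝ) + ((q + 1).choose 2 : ℝ) = (q : ℝ) ^ 2 := by
      exact_mod_cast congrArg (Nat.cast : ℕ → ℝ) hQ2card
    rw [h1] at h2
    push_cast at h2
    linarith
  have hBr : (B.card : ℝ) = (q : ℝ) * (((q : ℝ) ^ 2 - q) / 2) := by
    rw [hBcard]
    push_cast
    rw [hQ2r]
  have hEr : (E.card : ℝ) = (q : ℝ) * ((q : ℝ) - 1) * ((q : ℝ) - 2) / 6 := by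
    rw [hEcard]
    have hdq : q.descFactorial 3 = (q - 2) * ((q - 1) * (q * 1)) := by
      simp [Nat.descFactorial]
    have h6 : q.choose 3 * 6 = q * (q - 1) * (q - 2) := by
      calc q.choose 3 * 6 = Nat.factorial 3 * q.choose 3 := by
            rw [show Nat.factorial 3 = 6 from rfl]; ring
        _ = q.descFactorial 3 := (Nat.descFactorial_eq_factorial_mul_choose q 3).symm
        _ = (q - 2) * ((q - 1) * (q * 1)) := hdq
        _ = q * (q - 1) * (q - 2) := by ring
    have hc := congrArg (Nat.cast : ℕ → ℝ) h6
    push_cast [Nat.cast_sub (by omega : 1 ≤ q), Nat.cast_sub (by omega : 2 ≤ q)] at hc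
    linarith
  have hp' := congrArg (Nat.cast : ℕ → ℝ) hpart
  push_cast at hp'
  rw [hBr, hCr, hDr, hEr] at hp'
  have hAr : (A.card : ℝ) = (q : ℝ) ^ 3 - (q : ℝ) * (((q : ℝ) ^ 2 - q) / 2) - q
      - ((q : ℝ) ^ 2 - q) - (q : ℝ) * ((q : ℝ) - 1) * ((q : ℝ) - 2) / 6 := by
    linarith
  rw [hAr, hBr, hCr, hDr, hEr]
  ring
end

section
/- The sum over monic polynomials F of degree 3 in F_q[T] of 1/tau(F) equals (15q^3 - q^2 - 2q)/48, where tau(F) is the number of monic divisors of F. -/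
open Polynomial Finset
open scoped Classical

section Aux

variable {K : Type*} [Field K] [Fintype K]

set_option linter.unusedSectionVars false

/-- Monic polynomials of degree `n` are parametrized by their lower-order coefficients. -/
noncomputable def monicEquiv (K : Type*) [Field K] (n : ℕ) :
    (Fin n → K) ≃ {p : Polynomial K // p.Monic ∧ p.natDegree = n} := by
  have key : ∀ c : Fin n → K, (∑ i : Fin n, C (c i) * X ^ (i : ℕ) : K[X]).degree < n := by
    intro c
    refine lt_of_le_of_lt (degree_sum_le _ _) ?_
    rw [Finset.sup_lt_iff (by exact_mod_cast WithBot.bot_lt_coe n)]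
    intro i _
    exact lt_of_le_of_lt (degree_C_mul_X_pow_le _ _) (by exact_mod_cast i.2)
  have hdeg : ∀ c : Fin n → K,
      (X ^ n + ∑ i : Fin n, C (c i) * X ^ (i : ℕ) : K[X]).natDegree = n := by
    intro c
    have := degree_add_eq_left_of_degree_lt
      (p := (X : K[X]) ^ n) (q := ∑ i : Fin n, C (c i) * X ^ (i : ℕ))
      (by rw [degree_X_pow]; exact key c)
    rw [natDegree, this, degree_X_pow]; rfl
  have hcoeff : ∀ (c : Fin n → K) (i : Fin n),
      (X ^ n + ∑ j : Fin n, C (c j) * X ^ (j : ℕ) : K[X]).coeff i = c i := by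
    intro c i
    rw [coeff_add, coeff_X_pow, if_neg (by exact_mod_cast i.2.ne), finset_sum_coeff]
    simp only [coeff_C_mul, coeff_X_pow]
    rw [Finset.sum_eq_single i (fun j _ hj => by
      simp [Fin.val_eq_val, (Ne.symm hj)]) (by simp)]
    simp
  refine Equiv.ofBijective
    (fun c => ⟨X ^ n + ∑ i : Fin n, C (c i) * X ^ (i : ℕ),
      monic_X_pow_add (key c), hdeg c⟩) ⟨?_, ?_⟩
  · intro c d h
    funext i
    have := congrArg (fun p : {p : Polynomial K // p.Monic ∧ p.natDegree = n} =>
      p.1.coeff i) h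
    simpa [hcoeff] using this
  · rintro ⟨p, hm, hn⟩
    refine ⟨fun i => p.coeff i, Subtype.ext ?_⟩
    have := hm.as_sum
    rw [hn] at this
    simp only []
    rw [Fin.sum_univ_eq_sum_range (fun i => C (p.coeff i) * X ^ i) n, ← this]

noncomputable instance (n : ℕ) : Fintype {p : Polynomial K // p.Monic ∧ p.natDegree = n} :=
  Fintype.ofEquiv _ (monicEquiv K n)

lemma card_monic (n : ℕ) :
    Nat.card {p : Polynomial K // p.Monic ∧ p.natDegree = n} = Fintype.card K ^ n := by
  rw [← Nat.card_congr (monicEquiv K n)]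
  simp [Nat.card_eq_fintype_card]

lemma card_dvd_filter {D : K[X]} (hD : D.Monic) (hd : D.natDegree ≤ 3) :
    Nat.card {F : {p : K[X] // p.Monic ∧ p.natDegree = 3} // D ∣ F.1}
      = Fintype.card K ^ (3 - D.natDegree) := by
  rw [← card_monic (K := K) (3 - D.natDegree)]
  have hD0 : D ≠ 0 := hD.ne_zero
  refine (Nat.card_congr (Equiv.ofBijective
    (fun G : {p : K[X] // p.Monic ∧ p.natDegree = 3 - D.natDegree} =>
      (⟨⟨D * G.1, hD.mul G.2.1,
        by rw [natDegree_mul hD0 G.2.1.ne_zero, G.2.2]; omega⟩,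
        Dvd.intro _ rfl⟩ :
        {F : {p : K[X] // p.Monic ∧ p.natDegree = 3} // D ∣ F.1}))
    ⟨?_, ?_⟩)).symm
  · intro G₁ G₂ h
    have : D * G₁.1 = D * G₂.1 := congrArg (fun F => F.1.1) h
    exact Subtype.ext (mul_left_cancel₀ hD0 this)
  · rintro ⟨⟨F, hFm, hF3⟩, G, hFG⟩
    simp only at hFG
    have hGm : G.Monic := hD.of_mul_monic_left (hFG ▸ hFm)
    have hGd : G.natDegree = 3 - D.natDegree := by
      have h2 := natDegree_mul hD0 hGm.ne_zero
      rw [← hFG, hF3] at h2; omega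
    exact ⟨⟨G, hGm, hGd⟩, Subtype.ext (Subtype.ext hFG.symm)⟩

lemma sum_ite_dvd {D : K[X]} (hD : D.Monic) (hd : D.natDegree ≤ 3) :
    ∑ F : {p : K[X] // p.Monic ∧ p.natDegree = 3}, (if D ∣ F.1 then (1 : ℕ) else 0)
      = Fintype.card K ^ (3 - D.natDegree) := by
  rw [Finset.sum_boole, ← card_dvd_filter hD hd, Nat.card_eq_fintype_card,
    Fintype.card_subtype]
  simp

/-- The number of monic divisors of a monic cubic is `2 + 2·(number of distinct roots)`. -/
lemma tau_eq {F : K[X]} (hFm : F.Monic) (hF3 : F.natDegree = 3) :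
    Nat.card {D : K[X] // D.Monic ∧ D ∣ F} = 2 + 2 * F.roots.toFinset.card := by
  have hF0 : F ≠ 0 := hFm.ne_zero
  set s : Finset K := F.roots.toFinset with hs
  have hmem : ∀ a : K, a ∈ s ↔ F.IsRoot a := by
    intro a; rw [hs, Multiset.mem_toFinset, mem_roots hF0]
  set 𝒟 : Finset K[X] :=
    ({1, F} : Finset K[X]) ∪ (s.image (fun a => X - C a) ∪
      s.image (fun a => F /ₘ (X - C a))) with h𝒟
  have hdegg : ∀ a : K, (F /ₘ (X - C a)).natDegree = 2 := by
    intro a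
    rw [natDegree_divByMonic F (monic_X_sub_C a), hF3, natDegree_X_sub_C]
  have hset : {D : K[X] | D.Monic ∧ D ∣ F} = ↑𝒟 := by
    ext D
    simp only [Set.mem_setOf_eq, h𝒟, coe_union, coe_image, coe_insert, coe_singleton,
      Set.mem_union, Set.mem_insert_iff, Set.mem_singleton_iff, Set.mem_image, mem_coe]
    constructor
    · rintro ⟨hDm, hdvd⟩
      have hD3 : D.natDegree ≤ 3 := hF3 ▸ natDegree_le_of_dvd hdvd hF0
      have h04 : D.natDegree = 0 ∨ D.natDegree = 1 ∨ D.natDegree = 2 ∨ D.natDegree = 3 := by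
        omega
      rcases h04 with h | h | h | h
      · exact Or.inl (Or.inl (hDm.natDegree_eq_zero.mp h))
      · refine Or.inr (Or.inl ⟨-(D.coeff 0), ?_, ?_⟩)
        · rw [hmem, ← dvd_iff_isRoot, map_neg, sub_neg_eq_add, ← hDm.eq_X_add_C h]
          exact hdvd
        · rw [map_neg, sub_neg_eq_add, ← hDm.eq_X_add_C h]
      · obtain ⟨E, hE⟩ := hdvd
        have hEm : E.Monic := hDm.of_mul_monic_left (hE ▸ hFm)
        have hE1 : E.natDegree = 1 := by
          have := natDegree_mul hDm.ne_zero hEm.ne_zero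
          rw [← hE, hF3, h] at this; omega
        have hEX : E = X - C (-(E.coeff 0)) := by
          rw [map_neg, sub_neg_eq_add, ← hEm.eq_X_add_C hE1]
        refine Or.inr (Or.inr ⟨-(E.coeff 0), ?_, ?_⟩)
        · rw [hmem, ← dvd_iff_isRoot, ← hEX]
          exact Dvd.intro_left _ hE.symm
        · rw [← hEX, ← mul_divByMonic_cancel_left D hEm, mul_comm E D, ← hE]
      · obtain ⟨E, hE⟩ := hdvd
        have hEm : E.Monic := hDm.of_mul_monic_left (hE ▸ hFm)
        have hE0 : E.natDegree = 0 := by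
          have := natDegree_mul hDm.ne_zero hEm.ne_zero
          rw [← hE, hF3, h] at this; omega
        rw [hEm.natDegree_eq_zero.mp hE0, mul_one] at hE
        exact Or.inl (Or.inr hE.symm)
    · rintro (( rfl | rfl) | (⟨a, ha, rfl⟩ | ⟨a, ha, rfl⟩))
      · exact ⟨monic_one, one_dvd F⟩
      · exact ⟨hFm, dvd_rfl⟩
      · exact ⟨monic_X_sub_C a, dvd_iff_isRoot.mpr ((hmem a).mp ha)⟩
      · have heq : (X - C a) * (F /ₘ (X - C a)) = F :=
          mul_divByMonic_eq_iff_isRoot.mpr ((hmem a).mp ha)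
        exact ⟨(monic_X_sub_C a).of_mul_monic_left (by rw [heq]; exact hFm),
          Dvd.intro_left _ heq⟩
  have hcard : Nat.card {D : K[X] // D.Monic ∧ D ∣ F} = 𝒟.card := by
    rw [Nat.card_congr (Equiv.subtypeEquivRight (q := fun D => D ∈ 𝒟) (fun D => by
      rw [← Finset.mem_coe, ← hset]; exact Iff.rfl)), Nat.card_eq_finsetCard]
  rw [hcard, h𝒟]
  have h1F : (1 : K[X]) ≠ F := by
    intro h
    rw [← h, natDegree_one] at hF3; exact absurd hF3 (by omega)
  rw [card_union_of_disjoint, card_union_of_disjoint, card_pair h1F,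
    card_image_of_injective _ (fun a b h => by
      simpa using congrArg (fun p : K[X] => -(p.coeff 0)) h),
    card_image_of_injOn (fun a ha b hb h => by
      have h1 : (X - C a) * (F /ₘ (X - C a)) = F :=
        mul_divByMonic_eq_iff_isRoot.mpr ((hmem a).mp ha)
      have h2 : (X - C b) * (F /ₘ (X - C b)) = F :=
        mul_divByMonic_eq_iff_isRoot.mpr ((hmem b).mp hb)
      rw [h] at h1
      have hQ0 : F /ₘ (X - C b) ≠ 0 := by
        intro h0; rw [h0, mul_zero] at h2; exact hF0 h2.symm
      have := mul_right_cancel₀ hQ0 (h1.trans h2.symm)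
      simpa using congrArg (fun p : K[X] => -(p.coeff 0)) this)]
  · ring
  · rw [disjoint_left]
    rintro x hx hx'
    simp only [mem_image] at hx hx'
    obtain ⟨a, _, rfl⟩ := hx
    obtain ⟨b, _, hb⟩ := hx'
    have := hdegg b
    rw [hb, natDegree_X_sub_C] at this
    omega
  · rw [disjoint_left]
    rintro x hx hx'
    have hxd : x.natDegree = 0 ∨ x.natDegree = 3 := by
      rcases mem_insert.mp hx with rfl | hx1
      · exact Or.inl natDegree_one
      · rw [mem_singleton] at hx1; subst hx1; exact Or.inr hF3
    rcases mem_union.mp hx' with hx2 | hx2 <;>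
      simp only [mem_image] at hx2 <;> obtain ⟨a, _, rfl⟩ := hx2
    · rw [natDegree_X_sub_C] at hxd; omega
    · rw [hdegg a] at hxd; omega

lemma sum_ite_mem_card {α : Type*} [Fintype α] [DecidableEq α] (t : Finset α) :
    ∑ a : α, (if a ∈ t then (1 : ℕ) else 0) = t.card := by
  simp [Finset.sum_boole, Finset.filter_univ_mem]

lemma sum_pair_distinct {α : Type*} [Fintype α] [DecidableEq α] (t : Finset α) :
    ∑ a : α, ∑ b : α, (if a ∈ t ∧ b ∈ t ∧ a ≠ b then (1 : ℕ) else 0)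
      = t.card * (t.card - 1) := by
  have key : ∀ a : α, (∑ b : α, if a ∈ t ∧ b ∈ t ∧ a ≠ b then (1 : ℕ) else 0)
      = if a ∈ t then (t.erase a).card else 0 := by
    intro a
    by_cases ha : a ∈ t
    · rw [if_pos ha, ← sum_ite_mem_card (t.erase a)]
      refine Finset.sum_congr rfl fun b _ => if_congr ?_ rfl rfl
      simp only [Finset.mem_erase]
      constructor
      · rintro ⟨-, hb, hab⟩; exact ⟨fun h => hab h.symm, hb⟩
      · rintro ⟨hba, hb⟩; exact ⟨ha, hb, fun h => hba h.symm⟩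
    · simp [ha]
  rw [Finset.sum_congr rfl fun a _ => key a, Finset.sum_ite_mem, Finset.univ_inter,
    Finset.sum_congr rfl fun a ha => (Finset.card_erase_of_mem ha : _),
    Finset.sum_const, smul_eq_mul]

lemma sum_triple_distinct {α : Type*} [Fintype α] [DecidableEq α] (t : Finset α) :
    ∑ a : α, ∑ b : α, ∑ c : α,
        (if a ∈ t ∧ b ∈ t ∧ c ∈ t ∧ a ≠ b ∧ a ≠ c ∧ b ≠ c then (1 : ℕ) else 0)
      = t.card * (t.card - 1) * (t.card - 2) := by
  have key : ∀ a : α, (∑ b : α, ∑ c : α,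
      if a ∈ t ∧ b ∈ t ∧ c ∈ t ∧ a ≠ b ∧ a ≠ c ∧ b ≠ c then (1 : ℕ) else 0)
      = if a ∈ t then (t.erase a).card * ((t.erase a).card - 1) else 0 := by
    intro a
    by_cases ha : a ∈ t
    · rw [if_pos ha, ← sum_pair_distinct (t.erase a)]
      refine Finset.sum_congr rfl fun b _ => Finset.sum_congr rfl fun c _ =>
        if_congr ?_ rfl rfl
      simp only [Finset.mem_erase]
      constructor
      · rintro ⟨-, hb, hc, hab, hac, hbc⟩
        exact ⟨⟨fun h => hab h.symm, hb⟩, ⟨fun h => hac h.symm, hc⟩, hbc⟩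
      · rintro ⟨⟨hba, hb⟩, ⟨hca, hc⟩, hbc⟩
        exact ⟨ha, hb, hc, fun h => hba h.symm, fun h => hca h.symm, hbc⟩
    · simp [ha]
  rw [Finset.sum_congr rfl fun a _ => key a, Finset.sum_ite_mem, Finset.univ_inter,
    Finset.sum_congr rfl fun a ha => (by rw [Finset.card_erase_of_mem ha] : _),
    Finset.sum_const, smul_eq_mul, mul_assoc]
  rfl

lemma mem_rootFinset {F : K[X]} (hF : F ≠ 0) (a : K) :
    a ∈ F.roots.toFinset ↔ (X - C a) ∣ F := by
  rw [Multiset.mem_toFinset, mem_roots hF, dvd_iff_isRoot]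

lemma coprime_X_sub_C {a b : K} (h : a ≠ b) : IsCoprime (X - C a) (X - C b : K[X]) :=
  isCoprime_X_sub_C_of_isUnit_sub (sub_ne_zero_of_ne h).isUnit

lemma M1 : ∑ F : {p : K[X] // p.Monic ∧ p.natDegree = 3}, F.1.roots.toFinset.card
    = Fintype.card K ^ 3 := by
  have step : ∀ F : {p : K[X] // p.Monic ∧ p.natDegree = 3},
      F.1.roots.toFinset.card = ∑ a : K, if (X - C a) ∣ F.1 then (1 : ℕ) else 0 := by
    intro F
    rw [← sum_ite_mem_card (F.1.roots.toFinset)]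
    exact Finset.sum_congr rfl fun a _ =>
      if_congr (mem_rootFinset F.2.1.ne_zero a) rfl rfl
  rw [Finset.sum_congr rfl fun F _ => step F, Finset.sum_comm,
    Finset.sum_congr rfl fun a _ =>
      sum_ite_dvd (monic_X_sub_C a) (by rw [natDegree_X_sub_C]; omega)]
  simp only [natDegree_X_sub_C, Finset.sum_const, Finset.card_univ, smul_eq_mul]
  ring

lemma M2 : ∑ F : {p : K[X] // p.Monic ∧ p.natDegree = 3},
      F.1.roots.toFinset.card * (F.1.roots.toFinset.card - 1)
    = Fintype.card K * (Fintype.card K - 1) * Fintype.card K := by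
  have step : ∀ F : {p : K[X] // p.Monic ∧ p.natDegree = 3},
      F.1.roots.toFinset.card * (F.1.roots.toFinset.card - 1)
        = ∑ a : K, ∑ b : K,
            if a ≠ b ∧ (X - C a) * (X - C b) ∣ F.1 then (1 : ℕ) else 0 := by
    intro F
    rw [← sum_pair_distinct (F.1.roots.toFinset)]
    refine Finset.sum_congr rfl fun a _ => Finset.sum_congr rfl fun b _ =>
      if_congr ?_ rfl rfl
    rw [mem_rootFinset F.2.1.ne_zero, mem_rootFinset F.2.1.ne_zero]
    constructor
    · rintro ⟨ha, hb, hab⟩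
      exact ⟨hab, (coprime_X_sub_C hab).mul_dvd ha hb⟩
    · rintro ⟨hab, hd⟩
      exact ⟨dvd_trans (dvd_mul_right _ _) hd, dvd_trans (dvd_mul_left _ _) hd, hab⟩
  rw [Finset.sum_congr rfl fun F _ => step F, Finset.sum_comm]
  rw [Finset.sum_congr rfl fun a _ => Finset.sum_comm]
  have inner : ∀ a b : K, (∑ F : {p : K[X] // p.Monic ∧ p.natDegree = 3},
      if a ≠ b ∧ (X - C a) * (X - C b) ∣ F.1 then (1 : ℕ) else 0)
      = if a ≠ b then Fintype.card K else 0 := by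
    intro a b
    by_cases hab : a ≠ b
    · have hdeg : ((X - C a) * (X - C b) : K[X]).natDegree = 2 := by
        rw [natDegree_mul (X_sub_C_ne_zero a) (X_sub_C_ne_zero b), natDegree_X_sub_C,
          natDegree_X_sub_C]
      rw [if_pos hab,
        Finset.sum_congr rfl fun F _ => if_congr (and_iff_right hab) rfl rfl,
        sum_ite_dvd ((monic_X_sub_C a).mul (monic_X_sub_C b)) (by omega), hdeg, pow_one]
    · simp [hab]
  rw [Finset.sum_congr rfl fun a _ => Finset.sum_congr rfl fun b _ => inner a b]
  have : ∀ a b : K, (if a ≠ b then Fintype.card K else 0)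
      = (if a ∈ (univ : Finset K) ∧ b ∈ (univ : Finset K) ∧ a ≠ b then (1 : ℕ) else 0)
        * Fintype.card K := by
    intro a b
    by_cases hab : a ≠ b <;> simp [hab]
  rw [Finset.sum_congr rfl fun a _ => Finset.sum_congr rfl fun b _ => this a b]
  simp only [← Finset.sum_mul]
  rw [sum_pair_distinct (univ : Finset K), Finset.card_univ]

lemma M3 : ∑ F : {p : K[X] // p.Monic ∧ p.natDegree = 3},
      F.1.roots.toFinset.card * (F.1.roots.toFinset.card - 1)
        * (F.1.roots.toFinset.card - 2)
    = Fintype.card K * (Fintype.card K - 1) * (Fintype.card K - 2) := by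
  have step : ∀ F : {p : K[X] // p.Monic ∧ p.natDegree = 3},
      F.1.roots.toFinset.card * (F.1.roots.toFinset.card - 1)
          * (F.1.roots.toFinset.card - 2)
        = ∑ a : K, ∑ b : K, ∑ c : K,
            if a ≠ b ∧ a ≠ c ∧ b ≠ c ∧ (X - C a) * (X - C b) * (X - C c) ∣ F.1
            then (1 : ℕ) else 0 := by
    intro F
    rw [← sum_triple_distinct (F.1.roots.toFinset)]
    refine Finset.sum_congr rfl fun a _ => Finset.sum_congr rfl fun b _ =>
      Finset.sum_congr rfl fun c _ => if_congr ?_ rfl rfl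
    rw [mem_rootFinset F.2.1.ne_zero, mem_rootFinset F.2.1.ne_zero,
      mem_rootFinset F.2.1.ne_zero]
    constructor
    · rintro ⟨ha, hb, hc, hab, hac, hbc⟩
      exact ⟨hab, hac, hbc,
        (((coprime_X_sub_C hac).mul_left (coprime_X_sub_C hbc)).mul_dvd
          ((coprime_X_sub_C hab).mul_dvd ha hb) hc)⟩
    · rintro ⟨hab, hac, hbc, hd⟩
      exact ⟨dvd_trans (dvd_mul_of_dvd_left (dvd_mul_right _ _) _) hd,
        dvd_trans (dvd_mul_of_dvd_left (dvd_mul_left _ _) _) hd,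
        dvd_trans (dvd_mul_left _ _) hd, hab, hac, hbc⟩
  rw [Finset.sum_congr rfl fun F _ => step F, Finset.sum_comm,
    Finset.sum_congr rfl fun a _ => Finset.sum_comm,
    Finset.sum_congr rfl fun a _ => Finset.sum_congr rfl fun b _ => Finset.sum_comm]
  have inner : ∀ a b c : K, (∑ F : {p : K[X] // p.Monic ∧ p.natDegree = 3},
      if a ≠ b ∧ a ≠ c ∧ b ≠ c ∧ (X - C a) * (X - C b) * (X - C c) ∣ F.1
      then (1 : ℕ) else 0)
      = if a ∈ (univ : Finset K) ∧ b ∈ (univ : Finset K) ∧ c ∈ (univ : Finset K)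
          ∧ a ≠ b ∧ a ≠ c ∧ b ≠ c then (1 : ℕ) else 0 := by
    intro a b c
    by_cases h : a ≠ b ∧ a ≠ c ∧ b ≠ c
    · obtain ⟨hab, hac, hbc⟩ := h
      have hdeg : ((X - C a) * (X - C b) * (X - C c) : K[X]).natDegree = 3 := by
        rw [natDegree_mul (mul_ne_zero (X_sub_C_ne_zero a) (X_sub_C_ne_zero b))
            (X_sub_C_ne_zero c),
          natDegree_mul (X_sub_C_ne_zero a) (X_sub_C_ne_zero b)]
        simp [natDegree_X_sub_C]
      rw [Finset.sum_congr rfl fun F _ =>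
          if_congr (and_iff_right hab) rfl rfl,
        Finset.sum_congr rfl fun F _ => if_congr (and_iff_right hac) rfl rfl,
        Finset.sum_congr rfl fun F _ => if_congr (and_iff_right hbc) rfl rfl,
        sum_ite_dvd (((monic_X_sub_C a).mul (monic_X_sub_C b)).mul (monic_X_sub_C c))
          (by omega), hdeg]
      simp [hab, hac, hbc]
    · push_neg at h
      by_cases hab : a = b
      · simp [hab]
      by_cases hac : a = c
      · simp [hac, hab]
      · simp [hab, hac, h hab hac]
  rw [Finset.sum_congr rfl fun a _ => Finset.sum_congr rfl fun b _ =>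
    Finset.sum_congr rfl fun c _ => inner a b c,
    sum_triple_distinct (univ : Finset K), Finset.card_univ]

end Aux

/-- `∑_{F monic, deg F = 3} 1/τ(F) = (15q³ - q² - 2q)/48`, where `τ(F)` is the number of
monic divisors of `F`. -/
theorem sum_deg_three_inv_tau (q : ℕ) (K : Type*) [Field K] [Fintype K]
    (hK : Fintype.card K = q) :
    ∑' F : {p : Polynomial K // p.Monic ∧ p.natDegree = 3},
        (1 : ℝ) / (Nat.card {D : Polynomial K // D.Monic ∧ D ∣ F.1} : ℝ) =
      (15 * (q : ℝ) ^ 3 - (q : ℝ) ^ 2 - 2 * q) / 48 := by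
  classical
  have hq2 : 2 ≤ q := hK ▸ Fintype.one_lt_card
  rw [tsum_fintype]
  have hterm : ∀ F : {p : Polynomial K // p.Monic ∧ p.natDegree = 3},
      (1 : ℝ) / (Nat.card {D : Polynomial K // D.Monic ∧ D ∣ F.1} : ℝ)
        = 1 / 2 - (1 / 4) * (F.1.roots.toFinset.card : ℝ)
          + (1 / 12) * ((F.1.roots.toFinset.card * (F.1.roots.toFinset.card - 1) : ℕ) : ℝ)
          - (1 / 48) * ((F.1.roots.toFinset.card * (F.1.roots.toFinset.card - 1)
              * (F.1.roots.toFinset.card - 2) : ℕ) : ℝ) := by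
    intro F
    rw [tau_eq F.2.1 F.2.2]
    have hr3 : F.1.roots.toFinset.card ≤ 3 := by
      calc F.1.roots.toFinset.card ≤ Multiset.card F.1.roots :=
            F.1.roots.toFinset_card_le
        _ ≤ F.1.natDegree := F.1.card_roots'
        _ = 3 := F.2.2
    set r := F.1.roots.toFinset.card with hr
    interval_cases r <;> norm_num
  rw [Finset.sum_congr rfl fun F _ => hterm F, Finset.sum_sub_distrib,
    Finset.sum_add_distrib, Finset.sum_sub_distrib, ← Finset.mul_sum, ← Finset.mul_sum,
    ← Finset.mul_sum, ← Nat.cast_sum, ← Nat.cast_sum, ← Nat.cast_sum, M1, M2, M3,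
    Finset.sum_const, Finset.card_univ]
  have hcardS : Fintype.card {p : Polynomial K // p.Monic ∧ p.natDegree = 3}
      = Fintype.card K ^ 3 := by
    rw [← Nat.card_eq_fintype_card, card_monic]
  rw [hcardS, hK]
  obtain ⟨n, rfl⟩ : ∃ n, q = n + 2 := ⟨q - 2, by omega⟩
  have e1 : (n + 2 - 1 : ℕ) = n + 1 := by omega
  have e2 : (n + 2 - 2 : ℕ) = n := by omega
  rw [e1, e2]
  push_cast
  ring
end

section
/- Let (d_k) be a sequence of reals with d_1 in (0,1), d_{k+1} <= d_k for all k >= 1, and k d_k <= (k+1) d_{k+1} for all k >= 1, and set d_0 = 1. Define a_k by log(1 + sum_{k>=1} d_k t^k) = sum_{k>=1} a_k t^k as formal power series. Then 0 < a_k < 1/k for all k >= 1. -/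
set_option linter.unnecessarySeqFocus false

private lemma tele_aux (d : ℕ → ℝ) (m : ℕ) :
    ∑ k ∈ Finset.Icc 1 m, (d k - d (k+1)) = d 1 - d (m+1) := by
  induction m with
  | zero => simp
  | succ n ih =>
    rw [Finset.sum_Icc_succ_top (by omega : 1 ≤ n+1), ih]
    ring

private lemma tele (d : ℕ → ℝ) (m : ℕ) :
    ∑ k ∈ Finset.Icc 1 m, (d (m+1-k) - d (m+2-k)) = d 1 - d (m+1) := by
  rw [← tele_aux d m]
  apply Finset.sum_nbij' (fun k => m+1-k) (fun k => m+1-k) <;>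
    intro x hx <;> simp_all [Finset.mem_Icc] <;> try omega
  congr 1 <;> omega

/-- Proposition A (key step): if `d_1 ∈ (0,1)`, `d_{k+1} ≤ d_k` and `k d_k ≤ (k+1) d_{k+1}`
for all `k ≥ 1` (with `d_0 = 1`), and `a_k` are the coefficients of
`log(1 + ∑_{k≥1} d_k t^k)` (characterized by the recursion
`(n+1)a_{n+1} = (n+1)d_{n+1} - ∑_{k=1}^n k a_k d_{n+1-k}`), then `0 < a_k < 1/k`
for all `k ≥ 1`. -/
theorem log_coeff_pos_lt (d a : ℕ → ℝ) (hd0 : d 0 = 1)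
    (hd1 : 0 < d 1) (hd1' : d 1 < 1)
    (hmono : ∀ k : ℕ, 1 ≤ k → d (k + 1) ≤ d k)
    (hgrow : ∀ k : ℕ, 1 ≤ k → (k : ℝ) * d k ≤ ((k : ℝ) + 1) * d (k + 1))
    (ha : ∀ n : ℕ, ((n : ℝ) + 1) * a (n + 1) =
      ((n : ℝ) + 1) * d (n + 1) - ∑ k ∈ Finset.Icc 1 n, (k : ℝ) * a k * d (n + 1 - k)) :
    ∀ k : ℕ, 1 ≤ k → 0 < a k ∧ a k < 1 / k := by
  have ha1 : a 1 = d 1 := by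
    have h := ha 0
    simp at h
    linarith
  have key : ∀ n : ℕ, ∀ k : ℕ, 1 ≤ k → k ≤ n → 0 < (k:ℝ) * a k ∧ (k:ℝ) * a k < 1 := by
    intro n
    induction n with
    | zero => intro k h1 h2; omega
    | succ n ih =>
      intro k hk1 hk2
      by_cases hlt : k ≤ n
      · exact ih k hk1 hlt
      have hk : k = n + 1 := by omega
      subst hk
      match n, ih with
      | 0, _ =>
        constructor <;> · push_cast; rw [ha1]; linarith
      | (m+1), ih =>
        -- key identity
        have h1 := ha (m+1)
        have h2 := ha m
        rw [Finset.sum_Icc_succ_top (by omega : 1 ≤ m+1)] at h1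
        have he : m+1+1-(m+1) = 1 := by omega
        rw [he] at h1
        push_cast at h1 h2
        have hid : ((m:ℝ)+2) * a (m+2) =
            (((m:ℝ)+2) * d (m+2) - ((m:ℝ)+1) * d (m+1))
            + ((m:ℝ)+1) * a (m+1) * (1 - d 1)
            + ∑ k ∈ Finset.Icc 1 m, (k:ℝ) * a k * (d (m+1-k) - d (m+2-k)) := by
          have hdist : ∑ k ∈ Finset.Icc 1 m, (k:ℝ) * a k * (d (m+1-k) - d (m+2-k))
              = ∑ k ∈ Finset.Icc 1 m, (k:ℝ) * a k * d (m+1-k)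
                - ∑ k ∈ Finset.Icc 1 m, (k:ℝ) * a k * d (m+2-k) := by
            rw [← Finset.sum_sub_distrib]
            apply Finset.sum_congr rfl; intro x hx; ring
          rw [hdist]
          have : (m:ℝ)+1+1 = (m:ℝ)+2 := by ring
          rw [this] at h1
          have h1' : ((m:ℝ)+2) * a (m+1+1) = ((m:ℝ)+2) * d (m+1+1)
              - (∑ k ∈ Finset.Icc 1 m, (k:ℝ) * a k * d (m+1+1-k)
                 + ((m:ℝ)+1) * a (m+1) * d 1) := h1
          have hidx : ∀ k ∈ Finset.Icc 1 m,
              (k:ℝ) * a k * d (m+1+1-k) = (k:ℝ) * a k * d (m+2-k) := by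
            intro x hx; norm_num
          rw [Finset.sum_congr rfl hidx] at h1'
          have h2' : ∑ k ∈ Finset.Icc 1 m, (k:ℝ) * a k * d (m+1-k)
              = ((m:ℝ)+1) * d (m+1) - ((m:ℝ)+1) * a (m+1) := by linarith
          have hmm : (m:ℝ)+1+1 = (m:ℝ)+2 := by ring
          have hmm2 : a (m+1+1) = a (m+2) := rfl
          have hmm3 : d (m+1+1) = d (m+2) := rfl
          rw [hmm2, hmm3] at h1'
          linarith
        -- bounds on summands
        have hterm : ∀ k ∈ Finset.Icc 1 m,
            0 ≤ (k:ℝ) * a k * (d (m+1-k) - d (m+2-k)) ∧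
            (k:ℝ) * a k * (d (m+1-k) - d (m+2-k)) ≤ d (m+1-k) - d (m+2-k) := by
          intro k hk
          rw [Finset.mem_Icc] at hk
          obtain ⟨hb1, hb2⟩ := ih k hk.1 (by omega)
          have hΔ : 0 ≤ d (m+1-k) - d (m+2-k) := by
            have := hmono (m+1-k) (by omega)
            have he2 : m+1-k+1 = m+2-k := by omega
            rw [he2] at this
            linarith
          constructor
          · exact mul_nonneg hb1.le hΔ
          · nlinarith
        have hS0 : 0 ≤ ∑ k ∈ Finset.Icc 1 m, (k:ℝ) * a k * (d (m+1-k) - d (m+2-k)) :=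
          Finset.sum_nonneg fun k hk => (hterm k hk).1
        have hS1 : ∑ k ∈ Finset.Icc 1 m, (k:ℝ) * a k * (d (m+1-k) - d (m+2-k))
            ≤ d 1 - d (m+1) := by
          calc _ ≤ ∑ k ∈ Finset.Icc 1 m, (d (m+1-k) - d (m+2-k)) :=
                Finset.sum_le_sum fun k hk => (hterm k hk).2
            _ = d 1 - d (m+1) := tele d m
        have hA : 0 ≤ ((m:ℝ)+2) * d (m+2) - ((m:ℝ)+1) * d (m+1) := by
          have := hgrow (m+1) (by omega)
          push_cast at this
          linarith
        obtain ⟨hb1, hb2⟩ := ih (m+1) (by omega) le_rfl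
        push_cast at hb1 hb2
        have hpos : 0 < ((m:ℝ)+1) * a (m+1) * (1 - d 1) :=
          mul_pos hb1 (by linarith)
        have hup : ((m:ℝ)+1) * a (m+1) * (1 - d 1) < 1 - d 1 := by nlinarith
        have hdm : d (m+2) ≤ d (m+1) := hmono (m+1) (by omega)
        have hdm' : ((m:ℝ)+2) * d (m+2) ≤ ((m:ℝ)+2) * d (m+1) :=
          mul_le_mul_of_nonneg_left hdm (by positivity)
        constructor <;> · push_cast; nlinarith
  intro k hk
  obtain ⟨h1, h2⟩ := key k k hk le_rfl
  have hk0 : (0:ℝ) < k := by exact_mod_cast hk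
  constructor
  · nlinarith
  · rw [lt_div_iff₀ hk0]
    nlinarith
end

section
/- Let (d_k) be a sequence of reals with d_1 in (0,1) and, for all n >= 1, sum_{k=1}^n |d_k| + (n+1)|d_{n+1}| <= 1. Define a_k by log(1 + sum_{k>=1} d_k t^k) = sum_{k>=1} a_k t^k as formal power series. Then |a_k| <= 1/k for all k >= 1. -/
/-- Proposition B (key step): if `d_1 ∈ (0,1)` and for all `n ≥ 1`
`∑_{k=1}^n |d_k| + (n+1)|d_{n+1}| ≤ 1` (with `d_0 = 1`), and `a_k` are the coefficients of
`log(1 + ∑_{k≥1} d_k t^k)` (characterized by the recursion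
`(n+1)a_{n+1} = (n+1)d_{n+1} - ∑_{k=1}^n k a_k d_{n+1-k}`), then `|a_k| ≤ 1/k`
for all `k ≥ 1`. -/
theorem log_coeff_abs_le (d a : ℕ → ℝ) (hd0 : d 0 = 1)
    (hd1 : 0 < d 1) (hd1' : d 1 < 1)
    (hsum : ∀ n : ℕ, 1 ≤ n →
      ∑ k ∈ Finset.Icc 1 n, |d k| + ((n : ℝ) + 1) * |d (n + 1)| ≤ 1)
    (ha : ∀ n : ℕ, ((n : ℝ) + 1) * a (n + 1) =
      ((n : ℝ) + 1) * d (n + 1) - ∑ k ∈ Finset.Icc 1 n, (k : ℝ) * a k * d (n + 1 - k)) :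
    ∀ k : ℕ, 1 ≤ k → |a k| ≤ 1 / k := by
  have key : ∀ k : ℕ, 1 ≤ k → |(k : ℝ) * a k| ≤ 1 := by
    intro k
    induction k using Nat.strong_induction_on with
    | _ k ih =>
    intro hk
    match k, hk with
    | 1, _ =>
      have h := ha 0
      have he : Finset.Icc 1 0 = (∅ : Finset ℕ) := Finset.Icc_eq_empty (by omega)
      rw [he, Finset.sum_empty] at h
      norm_num at h ⊢
      rw [h, abs_of_pos hd1]
      linarith
    | (n+2), _ =>
      have h := ha (n+1)
      have hcast : ((n+1:ℕ):ℝ) + 1 = (n:ℝ) + 2 := by push_cast; ring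
      rw [hcast] at h
      have h2 : ((n:ℝ)+2) * a (n+2) = ((n:ℝ)+2) * d (n+2)
          - ∑ j ∈ Finset.Icc 1 (n+1), (j:ℝ) * a j * d (n+2-j) := h
      have hterm : ∀ j ∈ Finset.Icc 1 (n+1),
          |(j:ℝ) * a j * d (n+2-j)| ≤ |d (n+2-j)| := by
        intro j hj
        simp only [Finset.mem_Icc] at hj
        rw [abs_mul]
        have h1 := ih j (by omega) hj.1
        calc |(j:ℝ) * a j| * |d (n+2-j)| ≤ 1 * |d (n+2-j)| := by
              apply mul_le_mul_of_nonneg_right h1 (abs_nonneg _)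
          _ = |d (n+2-j)| := one_mul _
      have hsum_abs : |∑ j ∈ Finset.Icc 1 (n+1), (j:ℝ) * a j * d (n+2-j)|
          ≤ ∑ j ∈ Finset.Icc 1 (n+1), |d (n+2-j)| :=
        (Finset.abs_sum_le_sum_abs _ _).trans (Finset.sum_le_sum hterm)
      have hreindex : ∑ j ∈ Finset.Icc 1 (n+1), |d (n+2-j)|
          = ∑ j ∈ Finset.Icc 1 (n+1), |d j| := by
        apply Finset.sum_nbij' (fun j => n+2-j) (fun j => n+2-j)
        · intro j hj; simp only [Finset.mem_Icc] at *; omega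
        · intro j hj; simp only [Finset.mem_Icc] at *; omega
        · intro j hj; simp only [Finset.mem_Icc] at *; omega
        · intro j hj; simp only [Finset.mem_Icc] at *; omega
        · intro j hj; rfl
      have hsumn := hsum (n+1) (by omega)
      rw [hcast] at hsumn
      have hb : |((n:ℝ)+2) * a (n+2)|
          ≤ ∑ j ∈ Finset.Icc 1 (n+1), |d j| + ((n:ℝ)+2) * |d (n+2)| := by
        rw [h2]
        calc |((n:ℝ)+2) * d (n+2) - ∑ j ∈ Finset.Icc 1 (n+1), (j:ℝ) * a j * d (n+2-j)|
            ≤ |((n:ℝ)+2) * d (n+2)| + |∑ j ∈ Finset.Icc 1 (n+1), (j:ℝ) * a j * d (n+2-j)| :=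
              abs_sub _ _
          _ ≤ ((n:ℝ)+2) * |d (n+2)| + ∑ j ∈ Finset.Icc 1 (n+1), |d j| := by
              rw [abs_mul, abs_of_nonneg (by positivity : (0:ℝ) ≤ (n:ℝ)+2), ← hreindex]
              exact add_le_add le_rfl hsum_abs
          _ = _ := by ring
      have : ((n+2:ℕ):ℝ) = (n:ℝ) + 2 := by push_cast; ring
      rw [this]
      exact hb.trans hsumn
  intro k hk
  have hk' : (0:ℝ) < (k:ℝ) := by exact_mod_cast hk
  rw [le_div_iff₀ hk']
  have h := key k hk
  rw [abs_mul, abs_of_pos hk'] at h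
  linarith [abs_nonneg (a k), mul_comm (k:ℝ) |a k|, (mul_comm (k:ℝ) |a k|) ▸ h]
end
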